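/- arXiv:1201.2991 — 6 statements merged into one kernel-verified Lean document; each statement's English description precedes it below -/
import Mathlib

section
/- Let H, K, G be small categories, i : H ⥤ G and j : K ⥤ G functors, and M a category with all small colimits. Let p : (i ↓ j) ⥤ H and q : (i ↓ j) ⥤ K be the two projection functors of the comma category, with canonical natural transformation λ : p ⋙ i ⟶ q ⋙ j. Then for every functor W : H ⥤ M, the canonical comparison natural transformation Lan_q(p ⋙ W) ⟶ j ⋙ Lan_i(W), induced by λ and the universal property of the left Kan extension along q, is a natural isomorphism (Res_j ∘ Lan_i ≅ Lan_q ∘ Res_p). -/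
/-!
For `k : K`, the inclusion `i ↓ j(k) ⥤ q ↓ k`, `(h, i h ⟶ j k) ↦ ((h, k, _), 𝟙 k)`, is right
adjoint to `((h, k', a), f : k' ⟶ k) ↦ (h, a ≫ j f)`, hence final. So the colimit computing
`Lan_q (p ⋙ W)` at `k` may be taken over `i ↓ j(k)`, where it is the colimit computing
`Lan_i W` at `j k`: the extension `j ⋙ Lan_i W` of `p ⋙ W` along `q` is itself a pointwise
left Kan extension, so the comparison map from `Lan_q (p ⋙ W)` is an isomorphism.
-/

open CategoryTheory CategoryTheory.Limits

namespace CategoryTheory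

variable {H K G M : Type*} [Category* H] [Category* K] [Category* G] [Category* M]
  (i : H ⥤ G) (j : K ⥤ G)

instance Comma.final_costructuredArrowSndInclusion (k : K) :
    (Comma.costructuredArrowSndInclusion i j k).Final :=
  Functor.final_of_adjunction (Comma.costructuredArrowSndAdjunction i j k)

namespace Functor

variable {i} {W : H ⥤ M} {L : G ⥤ M} {α : W ⟶ i ⋙ L}

noncomputable def LeftExtension.IsPointwiseLeftKanExtensionAt.commaSnd {k : K}
    (h : (LeftExtension.mk L α).IsPointwiseLeftKanExtensionAt (j.obj k)) :
    (LeftExtension.mk (j ⋙ L) (whiskerLeft (Comma.fst i j) α ≫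
      whiskerRight (Comma.natTrans i j) L)).IsPointwiseLeftKanExtensionAt k :=
  Final.isColimitWhiskerEquiv (Comma.costructuredArrowSndInclusion i j k) _ <|
    h.ofIsoColimit <| Cocone.ext (Iso.refl _) fun x => by
      change (α.app x.left ≫ L.map x.hom) ≫ 𝟙 _ =
        (α.app x.left ≫ L.map x.hom) ≫ L.map (j.map (𝟙 k))
      simp

noncomputable def LeftExtension.IsPointwiseLeftKanExtension.commaSnd
    (h : (LeftExtension.mk L α).IsPointwiseLeftKanExtension) :
    (LeftExtension.mk (j ⋙ L) (whiskerLeft (Comma.fst i j) α ≫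
      whiskerRight (Comma.natTrans i j) L)).IsPointwiseLeftKanExtension :=
  fun k => (h (j.obj k)).commaSnd j

end Functor

end CategoryTheory

/-- For functors `i : H ⥤ G`, `j : K ⥤ G` between small categories and a cocomplete
category `M`, the canonical comparison natural transformation
`Lan_q (p ⋙ W) ⟶ j ⋙ Lan_i W` (where `p`, `q` are the projections of the comma
category `i ↓ j` and the comparison is induced by the canonical natural transformation
`λ : p ⋙ i ⟶ q ⋙ j` and the universal property of the left Kan extension along `q`)
is an isomorphism: `Res_j ∘ Lan_i ≅ Lan_q ∘ Res_p`. -/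
theorem stmt3 {H K G : Type} [SmallCategory H] [SmallCategory K] [SmallCategory G]
    {M : Type*} [Category M] [HasColimitsOfSize.{0, 0} M]
    (i : H ⥤ G) (j : K ⥤ G) (W : H ⥤ M) :
    IsIso (Functor.descOfIsLeftKanExtension
      ((Comma.snd i j).leftKanExtension (Comma.fst i j ⋙ W))
      ((Comma.snd i j).leftKanExtensionUnit (Comma.fst i j ⋙ W))
      (j ⋙ i.leftKanExtension W)
      (Functor.whiskerLeft (Comma.fst i j) (i.leftKanExtensionUnit W) ≫
        Functor.whiskerRight (Comma.natTrans i j) (i.leftKanExtension W))) := by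
  have hLan := Functor.isPointwiseLeftKanExtensionOfIsLeftKanExtension
    (i.leftKanExtension W) (i.leftKanExtensionUnit W)
  have := (hLan.commaSnd j).isLeftKanExtension
  exact (Functor.isLeftKanExtension_iff_isIso _ _ _
    (Functor.descOfIsLeftKanExtension_fac _ _ _ _)).mp this
end

section
/- (Mackey Decomposition) Let k be a commutative ring, G a group with subgroups H and K, and let S ⊆ G be a set of representatives for the double cosets K\G/H. For any k-linear representation V of H there is an isomorphism of representations of K: Res^G_K(Ind^G_H V) ≅ ⊕_{g ∈ S} Ind^K_{K ∩ gHg⁻¹}(V^g), where V^g is the representation of the subgroup K ∩ gHg⁻¹ on the k-module V in which x ∈ K ∩ gHg⁻¹ acts as the element g⁻¹ x g ∈ H acts on V. -/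
open CategoryTheory CategoryTheory.Limits

variable {G : Type} [Group G]

/-- The group homomorphism `K ∩ gHg⁻¹ →* H` sending `x` to `g⁻¹ x g`. -/
def conjHom (H K : Subgroup G) (g : G) :
    ↥(K ⊓ Subgroup.map (MulAut.conj g).toMonoidHom H) →* ↥H where
  toFun x := ⟨g⁻¹ * (x : G) * g, by
    obtain ⟨h, hh, heq⟩ := Subgroup.mem_map.mp (Subgroup.mem_inf.mp x.2).2
    simp only [← heq, MulAut.conj_apply, MulEquiv.coe_toMonoidHom]
    simpa [mul_assoc] using hh⟩
  map_one' := by ext; simp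
  map_mul' x y := by ext; simp [mul_assoc]; exact mul_assoc (x : G) (y : G) g

/-!
Both sides corepresent the functor `W ↦ ∏_{s ∈ S} Hom(V^s, Res W)` on representations `W` of `K`.
For the coproduct this is the family of adjunctions `Ind ⊣ Res`. For the other side, the
adjunctions `Ind^G_H ⊣ Res^G_H` and `Res^G_K ⊣ Coind^G_K` identify `Hom(Res_K Ind_H V, W)` with
`Hom_H(V, Res_H Coind_K W)`. An `H`-map `φ` into the coinduced module is a family of functions
`G → W` with `φ v (x * g) = x • φ v g` and `φ (h • v) g = φ v (g * h)`, so it is determined by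
its values at the representatives `s ∈ S`, and these are exactly `K ∩ sHs⁻¹`-maps `V^s → W`.
-/

namespace CategoryTheory

universe v u₁ u₂

variable {ι : Type v} {C : ι → Type u₁} [∀ i, Category.{v} (C i)] {D : Type u₂} [Category.{v} D]

def Functor.piCompCoyoneda (X : ∀ i, C i) (R : ∀ i, D ⥤ C i) : D ⥤ Type v where
  obj W := ∀ i, X i ⟶ (R i).obj W
  map f := TypeCat.ofHom fun σ i => σ i ≫ (R i).map f

noncomputable def Adjunction.sigmaCorepresentableBy {X : ∀ i, C i} {L : ∀ i, C i ⥤ D}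
    {R : ∀ i, D ⥤ C i} (adj : ∀ i, L i ⊣ R i) [HasCoproduct fun i => (L i).obj (X i)] :
    (Functor.piCompCoyoneda X R).CorepresentableBy (∐ fun i => (L i).obj (X i)) where
  homEquiv :=
    { toFun f i := (adj i).homEquiv _ _ (Sigma.ι (fun i => (L i).obj (X i)) i ≫ f)
      invFun σ := Limits.Sigma.desc fun i => ((adj i).homEquiv _ _).symm (σ i)
      left_inv f := Sigma.hom_ext _ _ fun i => by simp
      right_inv σ := funext fun i => by simp }
  homEquiv_comp g f := funext fun i => by
    show (adj i).homEquiv _ _ (Sigma.ι (fun i => (L i).obj (X i)) i ≫ f ≫ g) =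
      (adj i).homEquiv _ _ (Sigma.ι (fun i => (L i).obj (X i)) i ≫ f) ≫ (R i).map g
    rw [← Category.assoc, Adjunction.homEquiv_naturality_right]

end CategoryTheory

namespace Mackey

universe t

variable {H K : Subgroup G}

def IsDoubleCosetTransversal (K H : Subgroup G) (S : Set G) : Prop :=
  ∀ g : G, ∃! s, s ∈ S ∧
    DoubleCoset.doubleCoset s (K : Set G) (H : Set G) =
      DoubleCoset.doubleCoset g (K : Set G) (H : Set G)

namespace IsDoubleCosetTransversal

variable {S : Set G}

theorem exists_eq_mul_mul (hS : IsDoubleCosetTransversal K H S) (g : G) :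
    ∃ d : S × K × H, g = d.2.1 * d.1 * d.2.2 := by
  obtain ⟨s, ⟨hsS, hs⟩, -⟩ := hS g
  have hg : g ∈ DoubleCoset.doubleCoset s (K : Set G) (H : Set G) :=
    hs ▸ DoubleCoset.mem_doubleCoset_self K H g
  obtain ⟨x, hx, h, hh, rfl⟩ := DoubleCoset.mem_doubleCoset.mp hg
  exact ⟨(⟨s, hsS⟩, ⟨x, hx⟩, ⟨h, hh⟩), rfl⟩

theorem eq_of_mul_mul_eq (hS : IsDoubleCosetTransversal K H S) {s s' : S} {x x' : K} {h h' : H}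
    (e : (x : G) * s * h = x' * s' * h') : s = s' := by
  have doubleCoset_eq (t : S) (y : K) (z : H) :
      DoubleCoset.doubleCoset (t : G) (K : Set G) (H : Set G) =
        DoubleCoset.doubleCoset ((y : G) * t * z) (K : Set G) (H : Set G) :=
    (DoubleCoset.doubleCoset_eq_of_mem
      (DoubleCoset.mem_doubleCoset.mpr ⟨(y : G), y.2, (z : G), z.2, rfl⟩)).symm
  obtain ⟨_, -, huniq⟩ := hS ((x' : G) * s' * h')
  refine Subtype.ext ((huniq s ⟨s.2, ?_⟩).trans (huniq s' ⟨s'.2, doubleCoset_eq s' x' h'⟩).symm)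
  rw [← e]
  exact doubleCoset_eq s x h

noncomputable def decomp (hS : IsDoubleCosetTransversal K H S) (g : G) : S × K × H :=
  (hS.exists_eq_mul_mul g).choose

theorem eq_decomp (hS : IsDoubleCosetTransversal K H S) (g : G) :
    g = ((hS.decomp g).2.1 : G) * (hS.decomp g).1 * (hS.decomp g).2.2 :=
  (hS.exists_eq_mul_mul g).choose_spec

end IsDoubleCosetTransversal

theorem eq_mul_mul_inv_of_mul_mul_eq {g : G} {x x' : K} {h h' : H}
    (e : (x : G) * g * h = x' * g * h') : (x' : G)⁻¹ * x = g * ((h' * h⁻¹ : H) : G) * g⁻¹ := by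
  have hx : (x : G) = x' * g * h' * (h : G)⁻¹ * g⁻¹ := by rw [← e]; group
  rw [hx, Subgroup.coe_mul, Subgroup.coe_inv]
  group

theorem inv_mul_mem_inf_map_conj {g : G} {x x' : K} {h h' : H}
    (e : (x : G) * g * h = x' * g * h') :
    (x' : G)⁻¹ * x ∈ K ⊓ Subgroup.map (MulAut.conj g).toMonoidHom H :=
  Subgroup.mem_inf.mpr ⟨K.mul_mem (K.inv_mem x'.2) x.2,
    Subgroup.mem_map.mpr ⟨_, (h' * h⁻¹).2, (eq_mul_mul_inv_of_mul_mul_eq e).symm⟩⟩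

section

variable {k : Type*} [CommRing k] {S : Set G} {V : Rep.{t} k H} {W : Rep.{t} k K}

/-- The two decompositions differ by `y = x'⁻¹ * x ∈ K ⊓ gHg⁻¹` with `g⁻¹ * y * g = h' * h⁻¹`,
and `τ` intertwines the actions of `y`. -/
theorem rho_hom_rho_eq_of_mul_mul_eq {g : G}
    (τ : Rep.res (conjHom H K g) V ⟶ Rep.res (Subgroup.inclusion inf_le_left) W)
    {x x' : K} {h h' : H} (e : (x : G) * g * h = x' * g * h') (v : V) :
    W.ρ x (τ.hom (V.ρ h v)) = W.ρ x' (τ.hom (V.ρ h' v)) := by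
  set y : ↥(K ⊓ Subgroup.map (MulAut.conj g).toMonoidHom H) := ⟨_, inv_mul_mem_inf_map_conj e⟩
  have hx : x = x' * Subgroup.inclusion inf_le_left y := Subtype.ext (mul_inv_cancel_left _ _).symm
  have hh' : h' = conjHom H K g y * h := by
    refine Subtype.ext ?_
    change (h' : G) = g⁻¹ * ((x' : G)⁻¹ * x) * g * h
    rw [eq_mul_mul_inv_of_mul_mul_eq e, Subgroup.coe_mul, Subgroup.coe_inv]
    group
  calc W.ρ x (τ.hom (V.ρ h v))
      = W.ρ x' (W.ρ (Subgroup.inclusion inf_le_left y) (τ.hom (V.ρ h v))) := by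
        rw [← Module.End.mul_apply, ← map_mul, ← hx]
    _ = W.ρ x' (τ.hom (V.ρ (conjHom H K g y) (V.ρ h v))) := by
        rw [← Rep.coe_res_obj_ρ', ← Rep.hom_comm_apply τ y]; rfl
    _ = W.ρ x' (τ.hom (V.ρ h' v)) := by rw [hh', map_mul, Module.End.mul_apply]

noncomputable def evalAt (g : G) (φ : V ⟶ Rep.res H.subtype (Rep.coind K.subtype W)) :
    Rep.res (conjHom H K g) V ⟶ Rep.res (Subgroup.inclusion inf_le_left) W :=
  Rep.ofHom ⟨LinearMap.proj g ∘ₗ Submodule.subtype _ ∘ₗ φ.hom.toLinearMap,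
    fun y => LinearMap.ext fun v => by
      have hy : g * (conjHom H K g y : G) = (Subgroup.inclusion inf_le_left y : K) * g := by
        show g * (g⁻¹ * y * g) = y * g
        group
      calc (φ.hom (V.ρ (conjHom H K g y) v)).1 g
          = (φ.hom v).1 (g * conjHom H K g y) := by rw [Rep.hom_comm_apply]; rfl
        _ = W.ρ (Subgroup.inclusion inf_le_left y) ((φ.hom v).1 g) := by
          rw [hy]; exact (φ.hom v).2 (Subgroup.inclusion inf_le_left y) g⟩

theorem evalAt_hom_apply (g : G) (φ : V ⟶ Rep.res H.subtype (Rep.coind K.subtype W)) (v : V) :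
    (evalAt g φ).hom v = (φ.hom v).1 g := rfl

noncomputable def glueAt (hS : IsDoubleCosetTransversal K H S)
    (σ : ∀ s : S, Rep.res (conjHom H K s) V ⟶ Rep.res (Subgroup.inclusion inf_le_left) W)
    (g : G) : V →ₗ[k] W :=
  W.ρ (hS.decomp g).2.1 ∘ₗ (σ (hS.decomp g).1).hom.toLinearMap ∘ₗ V.ρ (hS.decomp g).2.2

theorem glueAt_apply (hS : IsDoubleCosetTransversal K H S)
    (σ : ∀ s : S, Rep.res (conjHom H K s) V ⟶ Rep.res (Subgroup.inclusion inf_le_left) W)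
    {g : G} {s : S} {x : K} {h : H} (e : g = x * s * h) (v : V) :
    glueAt hS σ g v = W.ρ x ((σ s).hom (V.ρ h v)) := by
  have e' := (hS.eq_decomp g).symm.trans e
  obtain rfl := hS.eq_of_mul_mul_eq e'
  exact rho_hom_rho_eq_of_mul_mul_eq (σ _) e' v

theorem glueAt_mem_coindV (hS : IsDoubleCosetTransversal K H S)
    (σ : ∀ s : S, Rep.res (conjHom H K s) V ⟶ Rep.res (Subgroup.inclusion inf_le_left) W)
    (v : V) : (fun g => glueAt hS σ g v) ∈ W.ρ.coindV K.subtype := by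
  intro a g
  obtain ⟨⟨s, x, h⟩, e⟩ := hS.exists_eq_mul_mul g
  have e' : K.subtype a * g = ((a * x : K) : G) * s * h := by simp [e, mul_assoc]
  simp only [glueAt_apply hS σ e', glueAt_apply hS σ e, map_mul, Module.End.mul_apply]

noncomputable def glue (hS : IsDoubleCosetTransversal K H S)
    (σ : ∀ s : S, Rep.res (conjHom H K s) V ⟶ Rep.res (Subgroup.inclusion inf_le_left) W) :
    V ⟶ Rep.res H.subtype (Rep.coind K.subtype W) :=
  Rep.ofHom ⟨(LinearMap.pi (glueAt hS σ)).codRestrict _ (glueAt_mem_coindV hS σ),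
    fun h₀ => LinearMap.ext fun v => Subtype.ext <| funext fun g => by
      obtain ⟨⟨s, x, h⟩, e⟩ := hS.exists_eq_mul_mul g
      have e' : g * h₀ = x * s * ((h * h₀ : H) : G) := by simp [e, mul_assoc]
      show glueAt hS σ g (V.ρ h₀ v) = glueAt hS σ (g * h₀) v
      rw [glueAt_apply hS σ e, glueAt_apply hS σ e', map_mul, Module.End.mul_apply]⟩

theorem glue_hom_apply (hS : IsDoubleCosetTransversal K H S)
    (σ : ∀ s : S, Rep.res (conjHom H K s) V ⟶ Rep.res (Subgroup.inclusion inf_le_left) W)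
    (v : V) (g : G) : ((glue hS σ).hom v).1 g = glueAt hS σ g v := rfl

variable (V W) in
noncomputable def homResCoindEquiv (hS : IsDoubleCosetTransversal K H S) :
    (V ⟶ Rep.res H.subtype (Rep.coind K.subtype W)) ≃
      ∀ s : S, Rep.res (conjHom H K s) V ⟶ Rep.res (Subgroup.inclusion inf_le_left) W where
  toFun φ s := evalAt (s : G) φ
  invFun := glue hS
  left_inv φ := by
    ext v g
    simp only [Representation.IntertwiningMap.toLinearMap_apply]
    obtain ⟨⟨s, x, h⟩, e⟩ := hS.exists_eq_mul_mul g
    have hφ : (φ.hom (V.ρ h v)).1 s = (φ.hom v).1 (s * h) := by rw [Rep.hom_comm_apply]; rfl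
    rw [glue_hom_apply, glueAt_apply hS _ e, evalAt_hom_apply, hφ, e, mul_assoc]
    exact ((φ.hom v).2 x _).symm
  right_inv σ := funext fun s => by
    ext v
    simp only [Representation.IntertwiningMap.toLinearMap_apply]
    have e : (s : G) = ((1 : K) : G) * s * ((1 : H) : G) := by simp
    rw [evalAt_hom_apply, glue_hom_apply, glueAt_apply hS σ e, map_one, map_one,
      Module.End.one_apply, Module.End.one_apply]

end

noncomputable def coindResCoyonedaIso {k : Type} [CommRing k] {S : Set G}
    (hS : IsDoubleCosetTransversal K H S) (V : Rep.{0} k H) :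
    (Rep.coindFunctor k K.subtype ⋙ Rep.resFunctor H.subtype) ⋙ coyoneda.obj (Opposite.op V) ≅
      Functor.piCompCoyoneda (fun s : S => Rep.res (conjHom H K s) V)
        (fun _ => Rep.resFunctor (Subgroup.inclusion inf_le_left)) :=
  NatIso.ofComponents (fun W => (homResCoindEquiv V W hS).toIso) fun _ => rfl

end Mackey

/-- Mackey decomposition: for subgroups `H, K` of `G`, a set `S` of representatives of the
double cosets `K \ G / H`, and a `k`-linear representation `V` of `H`,
`Res^G_K (Ind^G_H V) ≅ ⊕_{g ∈ S} Ind^K_{K ∩ gHg⁻¹} (V^g)`,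
where induction functors are (arbitrary) left adjoints of the corresponding restriction
functors, and `V^g` is the representation of `K ∩ gHg⁻¹` in which `x` acts as `g⁻¹ x g`
acts on `V`. -/
theorem stmt7 (k : Type) [CommRing k] (H K : Subgroup G) (S : Set G)
    (hS : ∀ g : G, ∃! s, s ∈ S ∧
      DoubleCoset.doubleCoset s (K : Set G) (H : Set G) = DoubleCoset.doubleCoset g (K : Set G) (H : Set G))
    (Ind : Rep.{0} k ↥H ⥤ Rep.{0} k G)
    (adj : Ind ⊣ Rep.resFunctor H.subtype)
    (IndK : ∀ s : S, Rep.{0} k ↥(K ⊓ Subgroup.map (MulAut.conj (s : G)).toMonoidHom H) ⥤ Rep.{0} k ↥K)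
    (adjK : ∀ s : S, IndK s ⊣
      Rep.resFunctor (Subgroup.inclusion inf_le_left))
    (V : Rep.{0} k ↥H) :
    Nonempty ((Rep.resFunctor K.subtype).obj (Ind.obj V) ≅
      ∐ fun s : S =>
        (IndK s).obj ((Rep.resFunctor (conjHom H K (s : G))).obj V)) :=
  let lhs := ((adj.comp (Rep.resCoindAdjunction k K.subtype)).corepresentableBy V).ofIso
    (Mackey.coindResCoyonedaIso hS V)
  ⟨lhs.uniqueUpToIso (Adjunction.sigmaCorepresentableBy adjK)⟩
end

section
/- (Frobenius Reciprocity / projection formula) Let k be a commutative ring, G a group, and H ≤ G a subgroup. For every k-linear representation V of G and every k-linear representation W of H, there is an isomorphism of representations of G: V ⊗ Ind^G_H(W) ≅ Ind^G_H(Res^G_H(V) ⊗ W), where ⊗ is the tensor product over k with diagonal action. -/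
/-!
Restriction commutes with internal homs: `Res [V, X] ≅ [Res V, Res X]`, both being `Hom_k(V, X)`
with `h` acting by `φ ↦ h φ h⁻¹`. Passing to left adjoints, `Ind ⋙ (V ⊗ -)` and
`(Res V ⊗ -) ⋙ Ind` are both left adjoint to `Res ⋙ [Res V, -]`, hence isomorphic.
-/

open CategoryTheory MonoidalCategory

namespace CategoryTheory.Adjunction

variable {C D : Type*} [Category C] [Category D] [MonoidalCategory C] [MonoidalCategory D]
  [MonoidalClosed C] [MonoidalClosed D] {L : D ⥤ C} {R : C ⥤ D}

noncomputable def projectionIso (adj : L ⊣ R) (V : C)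
    (e : ihom V ⋙ R ≅ R ⋙ ihom (R.obj V)) :
    tensorLeft (R.obj V) ⋙ L ≅ L ⋙ tensorLeft V :=
  ((ihom.adjunction (R.obj V)).comp adj).leftAdjointUniq
    ((adj.comp (ihom.adjunction V)).ofNatIsoRight e)

end CategoryTheory.Adjunction

namespace Rep

variable {k G H : Type*} [CommRing k] [Group G] [Group H]

noncomputable def ihomCompResFunctorIso (f : H →* G) (V : Rep k G) :
    ihom V ⋙ resFunctor f ≅ resFunctor f ⋙ ihom ((resFunctor f).obj V) :=
  NatIso.ofComponents
    (fun _ => mkIso (.mk (.refl k _) fun h => by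
      ext φ v
      simp only [LinearMap.comp_apply, MonoidHom.comp_apply, Representation.linHom_apply, map_inv]
      rfl))
    fun _ => by ext; rfl

end Rep

/-- Frobenius reciprocity (projection formula): for a subgroup `H ≤ G`, a commutative ring `k`,
an induction functor `Ind^G_H` (i.e. any left adjoint of the restriction functor
`Res^G_H : Rep k G ⥤ Rep k H`), a representation `V` of `G` and a representation `W` of `H`,
there is an isomorphism of representations of `G`:
`V ⊗ Ind^G_H W ≅ Ind^G_H (Res^G_H V ⊗ W)`. -/
theorem stmt8 (k : Type) [CommRing k] {G : Type} [Group G] (H : Subgroup G)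
    (Ind : Rep k ↥H ⥤ Rep k G)
    (adj : Ind ⊣ Rep.resFunctor H.subtype)
    (V : Rep k G) (W : Rep k ↥H) :
    Nonempty (V ⊗ Ind.obj W ≅
      Ind.obj ((Rep.resFunctor H.subtype).obj V ⊗ W)) :=
  ⟨((adj.projectionIso V (Rep.ihomCompResFunctorIso H.subtype V)).app W).symm⟩
end

section
/- Let Γ be a finite group, k a commutative ring, and A a k-linear representation of Γ such that scalar multiplication by the order |Γ| on the underlying k-module of A is bijective (for instance, if |Γ| is invertible in k). Then the group cohomology Hⁱ(Γ; A) vanishes for all i > 0. -/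
/-!
Every representation `A` embeds into the coinduced representation `Coind_S^G (Res_S A)`, for any
subgroup `S`, by `a ↦ (g ↦ g • a)`, and the trace `f ↦ ∑ g, g⁻¹ • f g` maps it back to `A`; the
composite is multiplication by `|G|`. When that is invertible on `A`, `A` is a retract of the
coinduced representation, so by Shapiro's lemma `Hⁿ(G, A)` is a retract of `Hⁿ(S, A)`. Taking `S`
trivial, the latter vanishes in positive degrees.
-/

open CategoryTheory

universe u

namespace Rep

variable {k G : Type u} [CommRing k] [Group G] (S : Subgroup G) (A : Rep.{u} k G)

noncomputable def toCoindRes : A ⟶ coind S.subtype (res S.subtype A) :=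
  ofHom
    { toFun a := ⟨fun g => A.ρ g a, fun s g => by simp⟩
      map_add' a b := by ext; simp
      map_smul' c a := by ext; simp
      isIntertwining' g := by
        ext a h
        show A.ρ h (A.ρ g a) = A.ρ (h * g) a
        simp }

noncomputable def coindResTrace [Fintype G] : coind S.subtype (res S.subtype A) ⟶ A :=
  ofHom
    { toFun f := ∑ g : G, A.ρ g⁻¹ (f.1 g)
      map_add' f f' := by simp [Finset.sum_add_distrib]
      map_smul' c f := by simp [Finset.smul_sum]
      isIntertwining' h := by
        ext f
        show ∑ g, A.ρ g⁻¹ (f.1 (g * h)) = A.ρ h (∑ g, A.ρ g⁻¹ (f.1 g))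
        rw [map_sum]
        exact Fintype.sum_equiv (Equiv.mulRight h) _ _ fun g => by
          simp [← Module.End.mul_apply, ← map_mul] }

lemma toCoindRes_comp_coindResTrace [Fintype G] :
    toCoindRes S A ≫ coindResTrace S A = Fintype.card G • 𝟙 A := by
  refine hom_ext (DFunLike.ext _ _ fun a => ?_)
  rw [nsmul_hom, hom_id, Representation.IntertwiningMap.coe_nsmul, Pi.smul_apply,
    Representation.IntertwiningMap.id_apply]
  simp [toCoindRes, coindResTrace, ← Module.End.mul_apply, ← map_mul]

variable {S A} in
noncomputable def retractCoindRes [Fintype G]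
    (hA : Function.Bijective fun a : A => Fintype.card G • a) :
    Retract A (coind S.subtype (res S.subtype A)) :=
  have : IsIso (Fintype.card G • 𝟙 A) := (ConcreteCategory.isIso_iff_bijective _).2 hA
  { i := toCoindRes S A
    r := coindResTrace S A ≫ inv (Fintype.card G • 𝟙 A)
    retract := by rw [← Category.assoc, toCoindRes_comp_coindResTrace, IsIso.hom_inv_id] }

end Rep

namespace groupCohomology

variable {k G : Type u} [CommRing k] [Group G] [Fintype G]

noncomputable def retractRes {A : Rep.{u} k G}
    (hA : Function.Bijective fun a : A => Fintype.card G • a) (S : Subgroup G) (n : ℕ) :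
    Retract (groupCohomology A n) (groupCohomology (Rep.res S.subtype A) n) :=
  ((Rep.retractCoindRes hA).map (functor k G n)).trans (.ofIso (coindIso _ n))

end groupCohomology

/-- If `Γ` is a finite group and `A` is a `k`-linear representation of `Γ` such that
scalar multiplication by the order `|Γ|` is bijective on the underlying module of `A`,
then the group cohomology `Hⁱ(Γ; A)` vanishes for all `i > 0`. -/
theorem stmt10 (k : Type) [CommRing k] (Γ : Type) [Group Γ] [Fintype Γ]
    (A : Rep k Γ)
    (h : Function.Bijective (fun a : A.V => (Fintype.card Γ : ℕ) • a))
    (i : ℕ) (hi : 0 < i) :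
    Limits.IsZero (groupCohomology A i) := by
  obtain ⟨n, rfl⟩ : ∃ n, i = n + 1 := ⟨i - 1, by omega⟩
  exact (isZero_groupCohomology_succ_of_subsingleton _ n).of_mono
    (groupCohomology.retractRes h ⊥ (n + 1)).i
end

section
/- Let C be a rigid monoidal category (every object has both a left dual and a right dual), let A be an object of C, and let u be a family of morphisms u_X : A ⊗ X → X ⊗ A, natural in X, satisfying the half-braiding axioms: u_{X ⊗ Y} equals the composite (u_X ⊗ id_Y) followed by (id_X ⊗ u_Y) (modulo associators), and u_I equals the composite of unitors (ρ_A followed by λ_A⁻¹). Then every component u_X is an isomorphism. (Hence for autonomous monoidal categories the lax centre coincides with the centre.) -/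
open CategoryTheory MonoidalCategory

/-- In a rigid (autonomous) monoidal category, every lax half braiding is a half braiding:
if `u X : A ⊗ X ⟶ X ⊗ A` is a family natural in `X` satisfying the two half-braiding
axioms (compatibility with tensor products and with the unit), then every component
`u X` is an isomorphism. Hence for autonomous monoidal categories the lax centre
coincides with the centre. -/
theorem stmt13 {C : Type*} [Category C] [MonoidalCategory C] [RigidCategory C]
    (A : C) (u : ∀ X : C, A ⊗ X ⟶ X ⊗ A)
    (hnat : ∀ {X Y : C} (f : X ⟶ Y), (A ◁ f) ≫ u Y = u X ≫ (f ▷ A))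
    (htensor : ∀ X Y : C, u (X ⊗ Y) =
      (α_ A X Y).inv ≫ (u X ▷ Y) ≫ (α_ X A Y).hom ≫ (X ◁ u Y) ≫ (α_ X Y A).inv)
    (hunit : u (𝟙_ C) = (ρ_ A).hom ≫ (λ_ A).inv) :
    ∀ X : C, IsIso (u X) := by
  have key : ∀ X Y : C, u X ▷ Y ≫ (α_ X A Y).hom ≫ X ◁ u Y =
      (α_ A X Y).hom ≫ u (X ⊗ Y) ≫ (α_ X Y A).hom := by
    intro X Y
    rw [htensor]
    simp
  intro X
  let v : X ⊗ A ⟶ A ⊗ X :=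
    𝟙 (X ⊗ A) ⊗≫ X ◁ A ◁ η_ (ᘁX) X ⊗≫ X ◁ u (ᘁX) ▷ X ⊗≫
      ε_ (ᘁX) X ▷ (A ⊗ X) ⊗≫ 𝟙 (A ⊗ X)
  refine ⟨v, ?_, ?_⟩
  · calc u X ≫ v
        = 𝟙 _ ⊗≫ (u X ▷ 𝟙_ C ≫ (X ⊗ A) ◁ η_ (ᘁX) X) ⊗≫ X ◁ u (ᘁX) ▷ X ⊗≫
          ε_ (ᘁX) X ▷ (A ⊗ X) ⊗≫ 𝟙 _ := by
          dsimp only [v]; monoidal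
      _ = 𝟙 _ ⊗≫ (A ⊗ X : C) ◁ η_ (ᘁX) X ⊗≫
          (u X ▷ (ᘁX) ≫ (α_ X A (ᘁX)).hom ≫ X ◁ u (ᘁX)) ▷ X ⊗≫
          ε_ (ᘁX) X ▷ (A ⊗ X) ⊗≫ 𝟙 _ := by
          rw [← whisker_exchange]; monoidal
      _ = 𝟙 _ ⊗≫ (A ⊗ X : C) ◁ η_ (ᘁX) X ⊗≫
          ((α_ A X (ᘁX)).hom ≫ u (X ⊗ ᘁX) ≫ (α_ X (ᘁX) A).hom) ▷ X ⊗≫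
          ε_ (ᘁX) X ▷ (A ⊗ X) ⊗≫ 𝟙 _ := by
          rw [key]
      _ = 𝟙 _ ⊗≫ (A ⊗ X : C) ◁ η_ (ᘁX) X ⊗≫
          (u (X ⊗ ᘁX) ≫ ε_ (ᘁX) X ▷ A) ▷ X ⊗≫ 𝟙 _ := by
          monoidal
      _ = 𝟙 _ ⊗≫ (A ⊗ X : C) ◁ η_ (ᘁX) X ⊗≫
          (A ◁ ε_ (ᘁX) X ≫ u (𝟙_ C)) ▷ X ⊗≫ 𝟙 _ := by
          rw [hnat]
      _ = 𝟙 _ ⊗≫ A ◁ (X ◁ η_ (ᘁX) X ⊗≫ ε_ (ᘁX) X ▷ X) ⊗≫ 𝟙 _ := by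
          rw [hunit]; monoidal
      _ = 𝟙 _ := by
          rw [ExactPairing.coevaluation_evaluation'']; monoidal
  · calc v ≫ u X
        = 𝟙 _ ⊗≫ X ◁ A ◁ η_ (ᘁX) X ⊗≫ X ◁ u (ᘁX) ▷ X ⊗≫
          (ε_ (ᘁX) X ▷ (A ⊗ X) ≫ 𝟙_ C ◁ u X) ⊗≫ 𝟙 _ := by
          dsimp only [v]; monoidal
      _ = 𝟙 _ ⊗≫ X ◁ A ◁ η_ (ᘁX) X ⊗≫ X ◁ u (ᘁX) ▷ X ⊗≫
          ((X ⊗ ᘁX : C) ◁ u X ≫ ε_ (ᘁX) X ▷ (X ⊗ A)) ⊗≫ 𝟙 _ := by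
          rw [whisker_exchange]
      _ = 𝟙 _ ⊗≫ X ◁ A ◁ η_ (ᘁX) X ⊗≫
          X ◁ (u (ᘁX) ▷ X ≫ (α_ (ᘁX) A X).hom ≫ (ᘁX) ◁ u X) ⊗≫
          ε_ (ᘁX) X ▷ (X ⊗ A) ⊗≫ 𝟙 _ := by
          monoidal
      _ = 𝟙 _ ⊗≫ X ◁ A ◁ η_ (ᘁX) X ⊗≫
          X ◁ ((α_ A (ᘁX) X).hom ≫ u ((ᘁX) ⊗ X) ≫ (α_ (ᘁX) X A).hom) ⊗≫
          ε_ (ᘁX) X ▷ (X ⊗ A) ⊗≫ 𝟙 _ := by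
          rw [key]
      _ = 𝟙 _ ⊗≫ X ◁ (A ◁ η_ (ᘁX) X ≫ u ((ᘁX) ⊗ X)) ⊗≫
          ε_ (ᘁX) X ▷ (X ⊗ A) ⊗≫ 𝟙 _ := by
          monoidal
      _ = 𝟙 _ ⊗≫ X ◁ (u (𝟙_ C) ≫ η_ (ᘁX) X ▷ A) ⊗≫
          ε_ (ᘁX) X ▷ (X ⊗ A) ⊗≫ 𝟙 _ := by
          rw [hnat]
      _ = 𝟙 _ ⊗≫ (X ◁ η_ (ᘁX : C) X ⊗≫ ε_ (ᘁX : C) X ▷ X) ▷ A ⊗≫ 𝟙 _ := by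
          rw [hunit]; monoidal
      _ = 𝟙 _ := by
          rw [ExactPairing.coevaluation_evaluation'']; monoidal
end

section
/- Let {D_α}_{α ∈ Λ} be a family of small categories with coproduct category D = Σ_{α ∈ Λ} D_α and inclusion functors m_α : D_α ⥤ D. Let K be a small category, r : D ⥤ K a functor, M a category with all small colimits, and T : D ⥤ M a functor. Then the left Kan extension of T along r decomposes as a coproduct in the functor category K ⥤ M: Lan_r(T) ≅ ∐_{α ∈ Λ} Lan_{m_α ⋙ r}(m_α ⋙ T). -/
/-!
A natural transformation out of a functor on `Σ α, D α` is the same as a family of natural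
transformations on the summands. Hence the universal property of
`∐ α, Lan_{m_α ⋙ r} (m_α ⋙ T)`, tested against any `G : K ⥤ M`, splits into the universal
properties of the summands, so this coproduct is itself a left Kan extension of `T` along `r`;
left Kan extensions are unique up to isomorphism.
-/

open CategoryTheory CategoryTheory.Limits

namespace CategoryTheory

lemma Sigma.natTrans_ext {ι : Type*} {C : ι → Type*} [∀ i, Category (C i)] {D : Type*}
    [Category D] {F G : (Σ i, C i) ⥤ D} {f g : F ⟶ G}
    (h : ∀ i, Functor.whiskerLeft (Sigma.incl i) f = Functor.whiskerLeft (Sigma.incl i) g) :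
    f = g := by
  ext ⟨i, X⟩
  exact NatTrans.congr_app (h i) X

namespace Functor

variable {ι : Type*} {C : ι → Type*} [∀ i, Category (C i)] {K : Type*} [Category K]
  {M : Type*} [Category M] {r : (Σ i, C i) ⥤ K} {T : (Σ i, C i) ⥤ M}
  (L : ι → K ⥤ M) (η : ∀ i, Sigma.incl i ⋙ T ⟶ (Sigma.incl i ⋙ r) ⋙ L i)
  [HasCoproduct L]

noncomputable def sigmaLeftExtensionUnit : T ⟶ r ⋙ ∐ L :=
  Sigma.natTrans fun i => η i ≫ whiskerLeft (Sigma.incl i ⋙ r) (Sigma.ι L i)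

lemma whiskerLeft_incl_sigmaLeftExtensionUnit_comp {G : K ⥤ M} (f : ∐ L ⟶ G) (i : ι) :
    whiskerLeft (Sigma.incl i) (sigmaLeftExtensionUnit L η ≫ whiskerLeft r f) =
      η i ≫ whiskerLeft (Sigma.incl i ⋙ r) (Sigma.ι L i ≫ f) := by
  ext X
  exact Category.assoc _ _ _

variable [∀ i, (L i).IsLeftKanExtension (η i)]

lemma sigmaLeftExtension_hom_ext {G : K ⥤ M} {f g : ∐ L ⟶ G}
    (h : sigmaLeftExtensionUnit L η ≫ whiskerLeft r f =
      sigmaLeftExtensionUnit L η ≫ whiskerLeft r g) : f = g :=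
  Sigma.hom_ext _ _ fun i => (L i).hom_ext_of_isLeftKanExtension (η i) _ _ <| by
    simpa only [whiskerLeft_incl_sigmaLeftExtensionUnit_comp] using
      congrArg (whiskerLeft (Sigma.incl i)) h

noncomputable def sigmaLeftExtensionDesc (G : K ⥤ M) (β : T ⟶ r ⋙ G) : ∐ L ⟶ G :=
  Limits.Sigma.desc fun i => (L i).descOfIsLeftKanExtension (η i) G (whiskerLeft (Sigma.incl i) β)

lemma sigmaLeftExtensionDesc_fac (G : K ⥤ M) (β : T ⟶ r ⋙ G) :
    sigmaLeftExtensionUnit L η ≫ whiskerLeft r (sigmaLeftExtensionDesc L η G β) = β :=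
  Sigma.natTrans_ext fun i => by
    rw [whiskerLeft_incl_sigmaLeftExtensionUnit_comp, sigmaLeftExtensionDesc, Sigma.ι_desc,
      descOfIsLeftKanExtension_fac]

instance isLeftKanExtension_sigma :
    (∐ L).IsLeftKanExtension (sigmaLeftExtensionUnit L η) :=
  ⟨⟨IsInitial.ofUniqueHom
    (fun E => StructuredArrow.homMk (sigmaLeftExtensionDesc L η E.right E.hom)
      (sigmaLeftExtensionDesc_fac L η E.right E.hom))
    fun E f => StructuredArrow.hom_ext _ _ <| sigmaLeftExtension_hom_ext L η <|
      (StructuredArrow.w f).trans (sigmaLeftExtensionDesc_fac L η E.right E.hom).symm⟩⟩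

end Functor

end CategoryTheory

/-- If a small category `D = Σ_{α ∈ Λ} D_α` is a disjoint union of small categories with
inclusions `m_α : D_α ⥤ D`, then for any functor `r : D ⥤ K` into a small category `K`,
any cocomplete category `M` and any functor `T : D ⥤ M`, the left Kan extension of `T`
along `r` decomposes as the coproduct, in the functor category `K ⥤ M`, of the left Kan
extensions `Lan_{m_α ⋙ r} (m_α ⋙ T)`. -/
theorem stmt14 {Λ : Type} (D : Λ → Type) [∀ α, SmallCategory (D α)]
    {K : Type} [SmallCategory K] (r : (Σ α, D α) ⥤ K)
    {M : Type*} [Category M] [HasColimitsOfSize.{0, 0} M] (T : (Σ α, D α) ⥤ M) :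
    Nonempty (r.leftKanExtension T ≅
      ∐ fun α : Λ => (Sigma.incl α ⋙ r).leftKanExtension (Sigma.incl α ⋙ T)) :=
  ⟨Functor.leftKanExtensionUnique _ (r.leftKanExtensionUnit T) _
    (Functor.sigmaLeftExtensionUnit _ fun α =>
      (Sigma.incl α ⋙ r).leftKanExtensionUnit (Sigma.incl α ⋙ T))⟩
end
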